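/- arXiv:1612.08299 — 4 statements merged into one kernel-verified Lean document; each statement's English description precedes it below -/
import Mathlib

section
/- Let R > r > 0 be real numbers. Define the curve γ : ℝ → ℝ³ by γ(t) = (√(R² − r²)·cos t, r + R·sin t, r·cos t). Then for every t: (i) γ(t) lies on the torus T = {(x, y, z) ∈ ℝ³ : (√(x² + y²) − R)² + z² = r²}; (ii) γ(t) lies in the plane P = {(x, y, z) ∈ ℝ³ : √(R² − r²)·z = r·x}; (iii) the distance from γ(t) to the point (0, r, 0) equals R. Hence γ traces a circle of radius R (a Villarceau circle) lying on the torus T. -/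
open Real

/-- The point `(x, y, z)` of Euclidean 3-space. -/
noncomputable def pt (x y z : ℝ) : EuclideanSpace ℝ (Fin 3) :=
  (WithLp.equiv 2 (Fin 3 → ℝ)).symm ![x, y, z]

/-- The torus of revolution with major radius `R` and minor radius `r`:
`T = {(x, y, z) : (√(x² + y²) − R)² + z² = r²}`. -/
def torus (R r : ℝ) : Set (EuclideanSpace ℝ (Fin 3)) :=
  {p | (Real.sqrt ((p 0) ^ 2 + (p 1) ^ 2) - R) ^ 2 + (p 2) ^ 2 = r ^ 2}

/-- The bitangent plane `P = {(x, y, z) : √(R² − r²)·z = r·x}`. -/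
def bitangentPlane (R r : ℝ) : Set (EuclideanSpace ℝ (Fin 3)) :=
  {p | Real.sqrt (R ^ 2 - r ^ 2) * p 2 = r * p 0}

/-- The Villarceau circle `γ(t) = (√(R² − r²)·cos t, r + R·sin t, r·cos t)`. -/
noncomputable def villarceau (R r : ℝ) (t : ℝ) : EuclideanSpace ℝ (Fin 3) :=
  pt (Real.sqrt (R ^ 2 - r ^ 2) * Real.cos t) (r + R * Real.sin t) (r * Real.cos t)

/-!
The horizontal radius `√(x² + y²)` of `γ(t)` is `R + r sin t`, because
`(R² − r²) cos² t + (r + R sin t)² = (R + r sin t)²`. Hence `γ(t)` sits at height `r cos t`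
and at horizontal distance `r sin t` from the core circle of the torus, i.e. on the tube of
radius `r`. The plane equation is immediate, and
`(R² − r²) cos² t + R² sin² t + r² cos² t = R²` gives the distance to `(0, r, 0)`.
-/

section Coordinates

variable (x y z : ℝ)

@[simp] lemma pt_zero : pt x y z 0 = x := rfl

@[simp] lemma pt_one : pt x y z 1 = y := rfl

@[simp] lemma pt_two : pt x y z 2 = z := rfl

lemma dist_pt (x' y' z' : ℝ) :
    dist (pt x y z) (pt x' y' z') = √((x - x') ^ 2 + (y - y') ^ 2 + (z - z') ^ 2) := by
  simp only [EuclideanSpace.dist_eq, Fin.sum_univ_three, pt_zero, pt_one, pt_two, Real.dist_eq,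
    sq_abs]

end Coordinates

lemma pt_mem_torus_of_sq_add_sq_eq {R r x y z ρ : ℝ} (hρ : 0 ≤ ρ) (hxy : x ^ 2 + y ^ 2 = ρ ^ 2)
    (htube : (ρ - R) ^ 2 + z ^ 2 = r ^ 2) : pt x y z ∈ torus R r := by
  simpa only [torus, Set.mem_ofPred_eq, pt_zero, pt_one, pt_two, hxy, sqrt_sq hρ] using htube

lemma villarceau_horizontal_sq {R r : ℝ} (h : r ^ 2 ≤ R ^ 2) (t : ℝ) :
    (√(R ^ 2 - r ^ 2) * cos t) ^ 2 + (r + R * sin t) ^ 2 = (R + r * sin t) ^ 2 := by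
  rw [mul_pow, sq_sqrt (sub_nonneg.mpr h)]
  linear_combination (R ^ 2 - r ^ 2) * sin_sq_add_cos_sq t

/-- For `R > r > 0`, every point `γ(t)` of the Villarceau curve lies on the torus `T`,
lies in the bitangent plane `P`, and is at distance `R` from the point `(0, r, 0)`;
hence `γ` traces a circle of radius `R` lying on the torus. -/
theorem villarceau_on_torus_in_plane_circle (R r : ℝ) (hr : 0 < r) (hR : r < R) (t : ℝ) :
    villarceau R r t ∈ torus R r ∧
    villarceau R r t ∈ bitangentPlane R r ∧
    dist (villarceau R r t) (pt 0 r 0) = R := by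
  have hsq : r ^ 2 ≤ R ^ 2 := pow_le_pow_left₀ hr.le hR.le 2
  have hρ : 0 ≤ R + r * sin t := by nlinarith [neg_one_le_sin t]
  refine ⟨?torus, ?plane, ?dist⟩
  case torus =>
    refine pt_mem_torus_of_sq_add_sq_eq hρ (villarceau_horizontal_sq hsq t) ?_
    linear_combination r ^ 2 * sin_sq_add_cos_sq t
  case plane =>
    show √(R ^ 2 - r ^ 2) * (r * cos t) = r * (√(R ^ 2 - r ^ 2) * cos t)
    ring
  case dist =>
    rw [villarceau, dist_pt]
    convert sqrt_sq (hr.trans hR).le using 2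
    linear_combination cos t ^ 2 * sq_sqrt (sub_nonneg.mpr hsq) + R ^ 2 * sin_sq_add_cos_sq t
end

section
/- Let R > r > 0. Let T = {(x, y, z) ∈ ℝ³ : (√(x² + y²) − R)² + z² = r²} and P = {(x, y, z) ∈ ℝ³ : √(R² − r²)·z = r·x}. Then the intersection T ∩ P equals C₊ ∪ C₋, where C₊ = {p ∈ P : ‖p − (0, r, 0)‖ = R} and C₋ = {p ∈ P : ‖p − (0, −r, 0)‖ = R}. That is, the bitangent plane cuts the torus in exactly two circles of radius R, the Villarceau circles. -/
open Real

/-! Writing `S = x² + y² + z²`, the torus is the quartic `(S + R² − r²)² = 4R²(x² + y²)`. On the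
bitangent plane `c z = r x` with `c² = R² − r²`, so `4R²x² = 4c²(x² + z²)` and the quartic becomes
the difference of squares `(S − c²)² − (2ry)²`. Its two factors are the spheres of radius `R`
about `(0, ±r, 0)`, which meet the plane in the two Villarceau circles. -/

theorem torus_equation_iff_quartic {R r : ℝ} (hR : 0 ≤ R) (hrR : r ^ 2 ≤ R ^ 2) (x y z : ℝ) :
    (√(x ^ 2 + y ^ 2) - R) ^ 2 + z ^ 2 = r ^ 2 ↔
      (x ^ 2 + y ^ 2 + z ^ 2 + R ^ 2 - r ^ 2) ^ 2 = 4 * R ^ 2 * (x ^ 2 + y ^ 2) := by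
  set u := √(x ^ 2 + y ^ 2)
  have hu : u ^ 2 = x ^ 2 + y ^ 2 := sq_sqrt (by positivity)
  have hS : 0 ≤ x ^ 2 + y ^ 2 + z ^ 2 + R ^ 2 - r ^ 2 := by nlinarith [sq_nonneg z]
  calc (u - R) ^ 2 + z ^ 2 = r ^ 2 ↔ x ^ 2 + y ^ 2 + z ^ 2 + R ^ 2 - r ^ 2 = 2 * R * u := by
        constructor <;> intro h
        · linear_combination h - hu
        · linear_combination h + hu
    _ ↔ (x ^ 2 + y ^ 2 + z ^ 2 + R ^ 2 - r ^ 2) ^ 2 = (2 * R * u) ^ 2 :=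
        (sq_eq_sq₀ hS (by positivity)).symm
    _ ↔ _ := by rw [show (2 * R * u) ^ 2 = 4 * R ^ 2 * u ^ 2 by ring, hu]

theorem quartic_factor_of_plane {c r x y z : ℝ} (h : c * z = r * x) :
    (x ^ 2 + y ^ 2 + z ^ 2 + c ^ 2) ^ 2 - 4 * (c ^ 2 + r ^ 2) * (x ^ 2 + y ^ 2) =
      (x ^ 2 + (y - r) ^ 2 + z ^ 2 - (c ^ 2 + r ^ 2)) *
        (x ^ 2 + (y + r) ^ 2 + z ^ 2 - (c ^ 2 + r ^ 2)) := by
  linear_combination 4 * (c * z + r * x) * h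

theorem dist_pt_sq (p : EuclideanSpace ℝ (Fin 3)) (a b c : ℝ) :
    dist p (pt a b c) ^ 2 = (p 0 - a) ^ 2 + (p 1 - b) ^ 2 + (p 2 - c) ^ 2 := by
  rw [EuclideanSpace.dist_eq, sq_sqrt (by positivity), Fin.sum_univ_three]
  simp [pt, Real.dist_eq, sq_abs]

theorem dist_pt_eq_iff {p : EuclideanSpace ℝ (Fin 3)} {a b c R : ℝ} (hR : 0 ≤ R) :
    dist p (pt a b c) = R ↔ (p 0 - a) ^ 2 + (p 1 - b) ^ 2 + (p 2 - c) ^ 2 - R ^ 2 = 0 := by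
  rw [← sq_eq_sq₀ dist_nonneg hR, dist_pt_sq, sub_eq_zero]

theorem mem_torus_iff_of_mem_bitangentPlane {R r : ℝ} (hR : 0 ≤ R) (hrR : r ^ 2 ≤ R ^ 2)
    {p : EuclideanSpace ℝ (Fin 3)} (hp : p ∈ bitangentPlane R r) :
    p ∈ torus R r ↔ dist p (pt 0 r 0) = R ∨ dist p (pt 0 (-r) 0) = R := by
  have hc : √(R ^ 2 - r ^ 2) ^ 2 = R ^ 2 - r ^ 2 := sq_sqrt (sub_nonneg.2 hrR)
  have hfactor := quartic_factor_of_plane (y := p 1) hp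
  rw [hc, sub_add_cancel] at hfactor
  rw [torus, Set.mem_ofPred_eq, torus_equation_iff_quartic hR hrR, ← sub_eq_zero,
    dist_pt_eq_iff hR, dist_pt_eq_iff hR, ← mul_eq_zero]
  constructor <;> intro h
  · linear_combination h - hfactor
  · linear_combination h + hfactor

/-- For `R > r > 0`, the bitangent plane cuts the torus in exactly the union of the two
Villarceau circles: `T ∩ P = C₊ ∪ C₋`, where `C₊` (resp. `C₋`) is the set of points of `P`
at distance `R` from `(0, r, 0)` (resp. from `(0, −r, 0)`). -/
theorem torus_inter_bitangent_eq_villarceau_circles (R r : ℝ) (hr : 0 < r) (hR : r < R) :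
    torus R r ∩ bitangentPlane R r =
      {p | p ∈ bitangentPlane R r ∧ dist p (pt 0 r 0) = R} ∪
      {p | p ∈ bitangentPlane R r ∧ dist p (pt 0 (-r) 0) = R} := by
  have hrR : r ^ 2 ≤ R ^ 2 := pow_le_pow_left₀ hr.le hR.le 2
  ext p
  simp only [Set.mem_inter_iff, Set.mem_union, Set.mem_ofPred_eq, ← and_or_left]
  exact and_comm.trans
    (and_congr_right (mem_torus_iff_of_mem_bitangentPlane (hr.trans hR).le hrR))
end

section
/- Let R > r > 0 and let γ(t) = (√(R² − r²)·cos t, r + R·sin t, r·cos t) be the Villarceau circle on the torus T with radii R, r. For a point (x, y, z) ∈ ℝ³ let ℓ(x, y, z) = (−y, x, 0) denote the tangent direction of the horizontal (latitude) circle through that point. Then for every t, the inner product ⟨γ'(t), ℓ(γ(t))⟩ divided by ‖γ'(t)‖·‖ℓ(γ(t))‖ equals √(R² − r²)/R. In particular the Villarceau circle meets every latitude circle of the torus at the same constant angle. -/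
open Real

open RealInnerProductSpace

/-- The tangent direction `(−y, x, 0)` of the horizontal (latitude) circle through `(x, y, z)`. -/
noncomputable def latitudeTangent (p : EuclideanSpace ℝ (Fin 3)) : EuclideanSpace ℝ (Fin 3) :=
  pt (-(p 1)) (p 0) 0

/-! The Villarceau circle has constant speed `R`, the latitude direction at `γ(t)` has length
`R + r sin t` (the distance of `γ(t)` from the axis), and their inner product is
`√(R² − r²)·(R + r sin t)`; the factor `R + r sin t > 0` cancels in the cosine. -/

lemma hasDerivAt_pt {x y z : ℝ → ℝ} {x' y' z' t : ℝ} (hx : HasDerivAt x x' t)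
    (hy : HasDerivAt y y' t) (hz : HasDerivAt z z' t) :
    HasDerivAt (fun t => pt (x t) (y t) (z t)) (pt x' y' z') t := by
  have hcoord : HasDerivAt (fun t => ![x t, y t, z t]) ![x', y', z'] t := by
    rw [hasDerivAt_pi]
    intro i
    fin_cases i <;> assumption
  exact (PiLp.continuousLinearEquiv 2 ℝ (fun _ : Fin 3 => ℝ)).symm.hasFDerivAt.comp_hasDerivAt t
    hcoord

lemma inner_pt (a b c d e f : ℝ) : ⟪pt a b c, pt d e f⟫ = a * d + b * e + c * f := by
  simp only [pt, WithLp.equiv_symm_apply, PiLp.inner_apply, RCLike.inner_apply, conj_trivial,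
    Fin.sum_univ_three, Matrix.cons_val_zero, Matrix.cons_val_one, Matrix.cons_val]
  ring

lemma norm_pt (a b c : ℝ) : ‖pt a b c‖ = √(a ^ 2 + b ^ 2 + c ^ 2) := by
  simp [EuclideanSpace.norm_eq, pt, Fin.sum_univ_three, add_assoc]

lemma latitudeTangent_pt (x y z : ℝ) : latitudeTangent (pt x y z) = pt (-y) x 0 := rfl

lemma deriv_villarceau (R r t : ℝ) :
    deriv (villarceau R r) t = pt (-(√(R ^ 2 - r ^ 2) * sin t)) (R * cos t) (-(r * sin t)) :=
  (hasDerivAt_pt ((hasDerivAt_cos t).const_mul _) (((hasDerivAt_sin t).const_mul R).const_add r)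
    ((hasDerivAt_cos t).const_mul r)).deriv.trans (by simp)

section villarceau

variable {R r : ℝ}

lemma sq_sqrt_sub_sq_of_abs_le (h : |r| ≤ R) : √(R ^ 2 - r ^ 2) ^ 2 = R ^ 2 - r ^ 2 :=
  sq_sqrt (sub_nonneg.2 (sq_le_sq' (abs_le.1 h).1 (abs_le.1 h).2))

lemma norm_deriv_villarceau (h : |r| ≤ R) (t : ℝ) : ‖deriv (villarceau R r) t‖ = R := by
  rw [deriv_villarceau, norm_pt, sqrt_eq_iff_eq_sq (by positivity) ((abs_nonneg r).trans h)]
  linear_combination (sin t ^ 2) * sq_sqrt_sub_sq_of_abs_le h + R ^ 2 * cos_sq_add_sin_sq t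

lemma norm_latitudeTangent_villarceau (h : |r| ≤ R) (t : ℝ) :
    ‖latitudeTangent (villarceau R r t)‖ = R + r * sin t := by
  have hdist : 0 ≤ R + r * sin t := by
    nlinarith [abs_le.1 h, neg_one_le_sin t, sin_le_one t, abs_nonneg r]
  rw [villarceau, latitudeTangent_pt, norm_pt, sqrt_eq_iff_eq_sq (by positivity) hdist]
  linear_combination (cos t ^ 2) * sq_sqrt_sub_sq_of_abs_le h + (R ^ 2 - r ^ 2) * sin_sq_add_cos_sq t

end villarceau

lemma inner_deriv_villarceau_latitudeTangent (R r t : ℝ) :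
    ⟪deriv (villarceau R r) t, latitudeTangent (villarceau R r t)⟫ =
      √(R ^ 2 - r ^ 2) * (R + r * sin t) := by
  rw [deriv_villarceau, villarceau, latitudeTangent_pt, inner_pt]
  linear_combination (√(R ^ 2 - r ^ 2) * R) * sin_sq_add_cos_sq t

/-- For `R > r > 0`, the Villarceau circle meets every latitude circle of the torus at the
same constant angle: for every `t`, the cosine of the angle between `γ'(t)` and the latitude
tangent direction at `γ(t)` equals `√(R² − r²)/R`. -/
theorem villarceau_latitude_angle (R r : ℝ) (hr : 0 < r) (hR : r < R) (t : ℝ) :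
    ⟪deriv (villarceau R r) t, latitudeTangent (villarceau R r t)⟫ /
        (‖deriv (villarceau R r) t‖ * ‖latitudeTangent (villarceau R r t)‖) =
      Real.sqrt (R ^ 2 - r ^ 2) / R := by
  have habs : |r| < R := by rwa [abs_of_pos hr]
  have hdist : 0 < R + r * sin t := by
    nlinarith [neg_one_le_sin t, sin_le_one t]
  rw [inner_deriv_villarceau_latitudeTangent, norm_deriv_villarceau habs.le,
    norm_latitudeTangent_villarceau habs.le]
  field_simp
end

section
/- Define F : ℝ³ → ℝ by F(x, y, z) = 8(x⁴ + y⁴ + z⁴) − 8(x² + y² + z²) + 3. The set of singular points of the contour surface S(1) = {p : F(p) = 1}, i.e. points p with F(p) = 1 and ∇F(p) = 0, consists of exactly six points: (±1/√2, 0, 0), (0, ±1/√2, 0), and (0, 0, ±1/√2). (These are the six nodes of S(1), corresponding to the faces of a cube.) -/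
/-- The Chmutov polynomial `F(x, y, z) = 8(x⁴ + y⁴ + z⁴) − 8(x² + y² + z²) + 3`. -/
def chmutov (p : ℝ × ℝ × ℝ) : ℝ :=
  8 * (p.1 ^ 4 + p.2.1 ^ 4 + p.2.2 ^ 4) - 8 * (p.1 ^ 2 + p.2.1 ^ 2 + p.2.2 ^ 2) + 3

/-- The gradient `∇F(x, y, z) = (32x³ − 16x, 32y³ − 16y, 32z³ − 16z)` of the Chmutov
polynomial. -/
def chmutovGrad (p : ℝ × ℝ × ℝ) : ℝ × ℝ × ℝ :=
  (32 * p.1 ^ 3 - 16 * p.1, 32 * p.2.1 ^ 3 - 16 * p.2.1, 32 * p.2.2 ^ 3 - 16 * p.2.2)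

/-!
At a critical point every coordinate `t` satisfies `t = 0` or `t² = 1/2`, hence `t⁴ = t²/2`, and
there `F = 3 − 4(x² + y² + z²)`. So `F = 1` forces `x² + y² + z² = 1/2`: exactly one coordinate
is `±1/√2` and the other two vanish.
-/

lemma cubic_eq_zero_iff (t : ℝ) : 32 * t ^ 3 - 16 * t = 0 ↔ t = 0 ∨ t ^ 2 = 1 / 2 := by
  rw [show 32 * t ^ 3 - 16 * t = 32 * t * (t ^ 2 - 1 / 2) by ring, mul_eq_zero, mul_eq_zero,
    sub_eq_zero]
  norm_num

lemma sq_eq_half_iff (t : ℝ) : t ^ 2 = 1 / 2 ↔ t = 1 / √2 ∨ t = -(1 / √2) := by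
  rw [← sq_eq_sq_iff_eq_or_eq_neg, div_pow, one_pow, Real.sq_sqrt zero_le_two]

lemma chmutovGrad_eq_zero_iff (p : ℝ × ℝ × ℝ) :
    chmutovGrad p = 0 ↔ (p.1 = 0 ∨ p.1 ^ 2 = 1 / 2) ∧ (p.2.1 = 0 ∨ p.2.1 ^ 2 = 1 / 2) ∧
      (p.2.2 = 0 ∨ p.2.2 ^ 2 = 1 / 2) := by
  simp only [chmutovGrad, Prod.ext_iff, Prod.fst_zero, Prod.snd_zero, cubic_eq_zero_iff]

lemma chmutov_eq_of_chmutovGrad_eq_zero {p : ℝ × ℝ × ℝ} (h : chmutovGrad p = 0) :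
    chmutov p = 3 - 4 * (p.1 ^ 2 + p.2.1 ^ 2 + p.2.2 ^ 2) := by
  simp only [chmutovGrad, Prod.ext_iff, Prod.fst_zero, Prod.snd_zero] at h
  obtain ⟨hx, hy, hz⟩ := h
  unfold chmutov
  linear_combination (p.1 * hx + p.2.1 * hy + p.2.2 * hz) / 4

/-- The set of singular points of the contour surface `S(1) = {p : F(p) = 1}` of the Chmutov
polynomial consists of exactly six points: `(±1/√2, 0, 0)`, `(0, ±1/√2, 0)`, `(0, 0, ±1/√2)`
— the six nodes of `S(1)`, corresponding to the faces of a cube. -/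
theorem chmutov_nodes_S1 :
    {p : ℝ × ℝ × ℝ | chmutov p = 1 ∧ chmutovGrad p = 0} =
      ({(1 / Real.sqrt 2, 0, 0), (-(1 / Real.sqrt 2), 0, 0),
        (0, 1 / Real.sqrt 2, 0), (0, -(1 / Real.sqrt 2), 0),
        (0, 0, 1 / Real.sqrt 2), (0, 0, -(1 / Real.sqrt 2))} : Set (ℝ × ℝ × ℝ)) := by
  ext p
  rw [Set.mem_ofPred_eq, and_congr_left fun h => by rw [chmutov_eq_of_chmutovGrad_eq_zero h],
    chmutovGrad_eq_zero_iff]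
  obtain ⟨x, y, z⟩ := p
  simp only [Set.mem_insert_iff, Set.mem_singleton_iff, Prod.mk.injEq]
  constructor
  · rintro ⟨hF, rfl | hx, rfl | hy, rfl | hz⟩
    -- the cases with zero, two or three nonzero coordinates contradict `x² + y² + z² = 1/2`
    all_goals try (exfalso; linarith)
    all_goals rcases (sq_eq_half_iff _).1 ‹_› with rfl | rfl <;> simp
  · rintro (⟨rfl, rfl, rfl⟩ | ⟨rfl, rfl, rfl⟩ | ⟨rfl, rfl, rfl⟩ | ⟨rfl, rfl, rfl⟩ | ⟨rfl, rfl, rfl⟩ |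
      ⟨rfl, rfl, rfl⟩) <;> norm_num
end
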